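/- Let $x_0,\ldots,x_t$ and $\beta$ be integers, and define $x_\nu := \beta + \min_{j_1+j_2=\nu-1,\ j_1,j_2\ge 0}(x_{j_1}+x_{j_2})$ for all $\nu \ge t+1$. Let $p$ with $0\le p\le t$ minimize $(x_j+\beta)/(j+1)$ over $0\le j\le t$. Then for all integers $k\ge 1$ we have $x_{p+k(p+1)} - x_p \ge k(x_p+\beta)$. -/

import Mathlib

/-!
Put `f ν = x ν + β`. Beyond `t` the recursion reads `f ν = min_{i+j+1=ν} (f i + f j)`, and the
line `ν ↦ (ν + 1) · f p / (p + 1)` is additive along such splittings. The choice of `p` puts it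
below `f` on `0, …, t`, so by strong induction it stays below `f` everywhere; at
`ν = p + k (p + 1)` this is the claim.
-/

theorem succ_mul_le_mul_of_split {f : ℕ → ℤ} {t : ℕ} {c d : ℤ}
    (hinit : ∀ ν ≤ t, ((ν : ℤ) + 1) * c ≤ d * f ν)
    (hsplit : ∀ ν, t < ν → ∃ i j, i + j + 1 = ν ∧ f ν = f i + f j) :
    ∀ ν : ℕ, ((ν : ℤ) + 1) * c ≤ d * f ν := by
  intro ν
  induction ν using Nat.strong_induction_on with
  | _ ν ih =>
    rcases le_or_gt ν t with hν | hν
    · exact hinit ν hν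
    · obtain ⟨i, j, rfl, hf⟩ := hsplit _ hν
      have hi := ih i (by omega)
      have hj := ih j (by omega)
      rw [hf]
      push_cast
      linarith

theorem exists_split_of_eq_add_inf' {β : ℤ} {x : ℕ → ℤ} {ν : ℕ} (hne : (Finset.range ν).Nonempty)
    (h : x ν = β + (Finset.range ν).inf' hne fun j => x j + x (ν - 1 - j)) :
    ∃ i j, i + j + 1 = ν ∧ x ν + β = (x i + β) + (x j + β) := by
  obtain ⟨i, hi, hmin⟩ := Finset.exists_mem_eq_inf' hne fun j => x j + x (ν - 1 - j)
  refine ⟨i, ν - 1 - i, by grind, ?_⟩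
  rw [h, hmin]
  ring

theorem stmt1 (t : ℕ) (β : ℤ) (x : ℕ → ℤ)
    (hrec : ∀ ν : ℕ, ∀ _hν : t + 1 ≤ ν,
      x ν = β + (Finset.range ν).inf' (Finset.nonempty_range_iff.mpr (by omega))
        (fun j => x j + x (ν - 1 - j)))
    (p : ℕ)
    (hmin : ∀ j : ℕ, j ≤ t → ((x p : ℚ) + β) / (p + 1) ≤ ((x j : ℚ) + β) / (j + 1)) :
    ∀ k : ℕ, 1 ≤ k → (k : ℤ) * (x p + β) ≤ x (p + k * (p + 1)) - x p := by
  have hinit : ∀ ν ≤ t, ((ν : ℤ) + 1) * (x p + β) ≤ ((p : ℤ) + 1) * (x ν + β) := by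
    intro ν hν
    have h := hmin ν hν
    rw [div_le_div_iff₀ (by positivity) (by positivity)] at h
    exact_mod_cast (by linarith : ((ν : ℚ) + 1) * (x p + β) ≤ ((p : ℚ) + 1) * (x ν + β))
  intro k _
  have h := succ_mul_le_mul_of_split (f := fun ν => x ν + β) hinit
    (fun ν hν => exists_split_of_eq_add_inf' _ (hrec ν hν))
    (p + k * (p + 1))
  push_cast at h
  have h' : ((p : ℤ) + 1) * (((k : ℤ) + 1) * (x p + β)) ≤
      ((p : ℤ) + 1) * (x (p + k * (p + 1)) + β) := by linarith
  have := le_of_mul_le_mul_left h' (by positivity)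
  linarith
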